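/- In the Artin group A(3,3,3) = ⟨s, t, r | sts = tst, trt = rtr, srs = rsr⟩, for every integer k, the element str conjugates g' = t^k s r^{-k} s^{-1} to its inverse; that is, (str)^{-1} (t^k s r^{-k} s^{-1}) (str) = (t^k s r^{-k} s^{-1})^{-1}. -/
import Mathlib


namespace A333

/-- The defining relations of the Artin group
`A(3,3,3) = ⟨s, t, r | sts = tst, trt = rtr, srs = rsr⟩`,
with `0, 1, 2` playing the roles of `s, t, r`. -/
def rels : Set (FreeGroup (Fin 3)) :=
  { FreeGroup.of 0 * FreeGroup.of 1 * FreeGroup.of 0 *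
      (FreeGroup.of 1 * FreeGroup.of 0 * FreeGroup.of 1)⁻¹,
    FreeGroup.of 1 * FreeGroup.of 2 * FreeGroup.of 1 *
      (FreeGroup.of 2 * FreeGroup.of 1 * FreeGroup.of 2)⁻¹,
    FreeGroup.of 0 * FreeGroup.of 2 * FreeGroup.of 0 *
      (FreeGroup.of 2 * FreeGroup.of 0 * FreeGroup.of 2)⁻¹ }

/-- The Artin group `A(3,3,3)`. -/
abbrev Grp := PresentedGroup rels

def s : Grp := PresentedGroup.of 0
def t : Grp := PresentedGroup.of 1
def r : Grp := PresentedGroup.of 2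

lemma mk_rel {x : FreeGroup (Fin 3)} (h : x ∈ rels) : (QuotientGroup.mk x : Grp) = 1 :=
  (QuotientGroup.eq_one_iff x).mpr (Subgroup.subset_normalClosure h)

lemma rel_st : s * t * s = t * s * t := by
  have h := mk_rel (x := FreeGroup.of 0 * FreeGroup.of 1 * FreeGroup.of 0 *
      (FreeGroup.of 1 * FreeGroup.of 0 * FreeGroup.of 1)⁻¹) (by left; rfl)
  simp only [QuotientGroup.mk_mul, QuotientGroup.mk_inv] at h
  have h' : (s * t * s) * (t * s * t)⁻¹ = 1 := h
  exact mul_inv_eq_one.mp h'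

lemma rel_tr : t * r * t = r * t * r := by
  have h := mk_rel (x := FreeGroup.of 1 * FreeGroup.of 2 * FreeGroup.of 1 *
      (FreeGroup.of 2 * FreeGroup.of 1 * FreeGroup.of 2)⁻¹) (by right; left; rfl)
  simp only [QuotientGroup.mk_mul, QuotientGroup.mk_inv] at h
  have h' : (t * r * t) * (r * t * r)⁻¹ = 1 := h
  exact mul_inv_eq_one.mp h'

lemma rel_sr : s * r * s = r * s * r := by
  have h := mk_rel (x := FreeGroup.of 0 * FreeGroup.of 2 * FreeGroup.of 0 *
      (FreeGroup.of 2 * FreeGroup.of 0 * FreeGroup.of 2)⁻¹) (by right; right; rfl)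
  simp only [QuotientGroup.mk_mul, QuotientGroup.mk_inv] at h
  have h' : (s * r * s) * (r * s * r)⁻¹ = 1 := h
  exact mul_inv_eq_one.mp h'

lemma conj_zpow_inv {G : Type*} [Group G] (a b : G) (n : ℤ) :
    a⁻¹ * b ^ n * a = (a⁻¹ * b * a) ^ n := by
  have h : (a⁻¹ * b * (a⁻¹)⁻¹) ^ n = a⁻¹ * b ^ n * (a⁻¹)⁻¹ := conj_zpow
  rw [inv_inv] at h
  exact h.symm

lemma conj_t : (s * t * r)⁻¹ * t * (s * t * r) = s * r * s⁻¹ := by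
  have h : t * (s * t * r) = (s * t * r) * (s * r * s⁻¹) := by
    calc t * (s * t * r) = (t * s * t) * r := by group
      _ = (s * t * s) * r := by rw [rel_st]
      _ = s * t * (s * r * s) * s⁻¹ := by group
      _ = s * t * (r * s * r) * s⁻¹ := by rw [rel_sr]
      _ = (s * t * r) * (s * r * s⁻¹) := by group
  calc (s * t * r)⁻¹ * t * (s * t * r)
      = (s * t * r)⁻¹ * (t * (s * t * r)) := by group
    _ = (s * t * r)⁻¹ * ((s * t * r) * (s * r * s⁻¹)) := by rw [h]
    _ = s * r * s⁻¹ := by group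

lemma conj_srs : (s * t * r)⁻¹ * (s * r * s⁻¹) * (s * t * r) = t := by
  have h : (s * r * s⁻¹) * (s * t * r) = (s * t * r) * t := by
    calc (s * r * s⁻¹) * (s * t * r) = s * (r * t * r) := by group
      _ = s * (t * r * t) := by rw [rel_tr]
      _ = (s * t * r) * t := by group
  calc (s * t * r)⁻¹ * (s * r * s⁻¹) * (s * t * r)
      = (s * t * r)⁻¹ * ((s * r * s⁻¹) * (s * t * r)) := by group
    _ = (s * t * r)⁻¹ * ((s * t * r) * t) := by rw [h]
    _ = t := by group

end A333

open A333 in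
/-- In `A(3,3,3)`, for every integer `k`, the element `str` conjugates
`g' = t^k s r^{-k} s⁻¹` to its inverse. -/
theorem A333_str_conjugates_to_inverse (k : ℤ) :
    (s * t * r)⁻¹ * (t ^ k * s * r ^ (-k) * s⁻¹) * (s * t * r) =
      (t ^ k * s * r ^ (-k) * s⁻¹)⁻¹ := by
  set c := s * t * r with hc
  have hct : c⁻¹ * t ^ k * c = s * r ^ k * s⁻¹ := by
    rw [conj_zpow_inv, conj_t, conj_zpow]
  have hcs : c⁻¹ * (s * r ^ (-k) * s⁻¹) * c = t ^ (-k) := by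
    have h1 : s * r ^ (-k) * s⁻¹ = (s * r * s⁻¹) ^ (-k) := (conj_zpow).symm
    rw [h1, show c⁻¹ * (s * r * s⁻¹) ^ (-k) * c = (c⁻¹ * (s * r * s⁻¹) * c) ^ (-k) from
      conj_zpow_inv c (s * r * s⁻¹) (-k), conj_srs]
  calc c⁻¹ * (t ^ k * s * r ^ (-k) * s⁻¹) * c
      = (c⁻¹ * t ^ k * c) * (c⁻¹ * (s * r ^ (-k) * s⁻¹) * c) := by group
    _ = (s * r ^ k * s⁻¹) * t ^ (-k) := by rw [hct, hcs]
    _ = (t ^ k * s * r ^ (-k) * s⁻¹)⁻¹ := by group
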